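/- Let m > 0 and k > 0 and ω = √(k² + m²). The reflection amplitude R_k = (Γ(1/2−i(k+ω))² / Γ(1/2+i(k−ω))²) · (Γ(2ik)/Γ(−2ik)) satisfies |R_k|² = cosh²(π(k−ω)) / cosh²(π(k+ω)). -/

import Mathlib

open Real Complex

/-- `ω = √(k² + m²)`. -/
noncomputable def bhOmega (m k : ℝ) : ℝ := Real.sqrt (k ^ 2 + m ^ 2)

/-- The reflection amplitude
`R_k = (Γ(1/2−i(k+ω))²/Γ(1/2+i(k−ω))²)·(Γ(2ik)/Γ(−2ik))`. -/
noncomputable def bhR (m k : ℝ) : ℂ :=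
  (Complex.Gamma (1 / 2 - Complex.I * ((k : ℂ) + (bhOmega m k : ℂ))) ^ 2 /
      Complex.Gamma (1 / 2 + Complex.I * ((k : ℂ) - (bhOmega m k : ℂ))) ^ 2) *
    (Complex.Gamma (2 * Complex.I * (k : ℂ)) /
      Complex.Gamma (-(2 * Complex.I * (k : ℂ))))

/-!
On the critical line `1 - s = conj s`, so the reflection formula gives
`|Γ(1/2 + it)|² = π / sin(π/2 + iπt) = π / cosh(πt)`. Hence
`|Γ(1/2 - i(k+ω)) / Γ(1/2 + i(k-ω))|² = cosh(π(k-ω)) / cosh(π(k+ω))`, while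
`Γ(2ik) / Γ(-2ik)` is a quotient of conjugate values and has modulus one.
-/

open scoped ComplexConjugate

namespace Complex

lemma Gamma_ne_zero_of_im_ne_zero {z : ℂ} (hz : z.im ≠ 0) : Gamma z ≠ 0 :=
  Gamma_ne_zero fun n hn => hz (by simp [hn])

lemma norm_Gamma_div_Gamma_conj {z : ℂ} (hz : Gamma z ≠ 0) :
    ‖Gamma z / Gamma (conj z)‖ = 1 := by
  rw [Gamma_conj, norm_div, norm_conj, div_self (norm_ne_zero_iff.mpr hz)]

lemma norm_Gamma_one_half_add_I_mul_sq (t : ℝ) :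
    ‖Gamma (1 / 2 + I * t)‖ ^ 2 = π / Real.cosh (π * t) := by
  have h_one_sub : 1 - (1 / 2 + I * t) = conj (1 / 2 + I * (t : ℂ)) := by
    apply Complex.ext <;> norm_num
  have h_sin : Complex.sin (π * (1 / 2 + I * t)) = Real.cosh (π * t) := by
    have : (π : ℂ) * (1 / 2 + I * t) = π / 2 + (π * t : ℝ) * I := by push_cast; ring
    rw [this, sin_add_mul_I, ← ofReal_ofNat, ← ofReal_div, ← ofReal_sin, ← ofReal_cos,
      Real.sin_pi_div_two, Real.cos_pi_div_two, ofReal_cosh]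
    simp
  have h_reflection := Gamma_mul_Gamma_one_sub (1 / 2 + I * (t : ℂ))
  rw [h_one_sub, Gamma_conj, mul_conj, h_sin] at h_reflection
  rw [← normSq_eq_norm_sq]
  exact_mod_cast h_reflection

end Complex

theorem bhR_abs_sq_general (m k : ℝ) (hk : 0 < k) :
    ‖bhR m k‖ ^ 2
      = Real.cosh (π * (k - bhOmega m k)) ^ 2 /
          Real.cosh (π * (k + bhOmega m k)) ^ 2 := by
  set ω := bhOmega m k
  have h_phase : ‖Gamma (2 * I * k) / Gamma (-(2 * I * k))‖ = 1 := by
    have h_conj : -(2 * I * k) = conj (2 * I * (k : ℂ)) := by apply Complex.ext <;> simp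
    rw [h_conj]
    exact norm_Gamma_div_Gamma_conj (Gamma_ne_zero_of_im_ne_zero (by simp [hk.ne']))
  have h_num : (1 / 2 : ℂ) - I * (k + ω) = 1 / 2 + I * ((-(k + ω) : ℝ) : ℂ) := by
    push_cast; ring
  have h_den : (1 / 2 : ℂ) + I * (k - ω) = 1 / 2 + I * ((k - ω : ℝ) : ℂ) := by
    push_cast; ring
  rw [bhR, norm_mul, h_phase, mul_one, norm_div, norm_pow, norm_pow, h_num, h_den, div_pow,
    norm_Gamma_one_half_add_I_mul_sq, norm_Gamma_one_half_add_I_mul_sq, mul_neg, Real.cosh_neg]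
  have h_cosh_add := (Real.cosh_pos (π * (k + ω))).ne'
  have h_cosh_sub := (Real.cosh_pos (π * (k - ω))).ne'
  field_simp

/-- `|R_k|² = cosh²(π(k−ω))/cosh²(π(k+ω))`. -/
theorem bhR_abs_sq (m k : ℝ) (hm : 0 < m) (hk : 0 < k) :
    ‖bhR m k‖ ^ 2
      = Real.cosh (π * (k - bhOmega m k)) ^ 2 /
          Real.cosh (π * (k + bhOmega m k)) ^ 2 :=
  bhR_abs_sq_general m k hk
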